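/- In the four-state protocol of Algorithm 2, let a configuration C be reachable from the all-r^ω initial configuration on n agents. If n is even and #token = 0 in C, then #red = #blue = n/2 in C, where red agents are those in state r^ω or r and blue agents are those in state b^ω or b. -/

import Mathlib

/-- States of the four-state protocol: r^ω, b^ω, r, b. -/
inductive St : Type
  | rw | bw | r | b
deriving DecidableEq

/-- Deterministic transition function of the protocol. -/
def delta : St → St → St × St
  | .rw, .rw => (.r, .b)
  | .rw, .bw => (.b, .b)
  | .bw, .rw => (.b, .b)
  | .rw, .r  => (.r, .rw)
  | .r,  .rw => (.rw, .r)
  | .bw, .b  => (.b, .bw)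
  | .b,  .bw => (.bw, .b)
  | .rw, .b  => (.r, .bw)
  | .b,  .rw => (.bw, .r)
  | .bw, .r  => (.b, .rw)
  | .r,  .bw => (.rw, .b)
  | p, q     => (p, q)

/-- One step: apply the rule to an ordered pair of distinct agents. -/
def Step {n : ℕ} (C C' : Fin n → St) : Prop :=
  ∃ i j : Fin n, i ≠ j ∧
    C' = Function.update (Function.update C i (delta (C i) (C j)).1) j
          (delta (C i) (C j)).2

/-- Number of agents in state `s`. -/
def cnt {n : ℕ} (C : Fin n → St) (s : St) : ℕ :=
  (Finset.univ.filter fun a => C a = s).card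

/-- Number of token-holding agents (state r^ω or b^ω). -/
def tokens {n : ℕ} (C : Fin n → St) : ℕ := cnt C .rw + cnt C .bw

/-- Number of red agents (state r^ω or r). -/
def reds {n : ℕ} (C : Fin n → St) : ℕ := cnt C .rw + cnt C .r

/-- Number of blue agents (state b^ω or b). -/
def blues {n : ℕ} (C : Fin n → St) : ℕ := cnt C .bw + cnt C .b

/-- Color of a state: `true` = red, `false` = blue. -/
def isRed : St → Bool
  | .rw => true
  | .r  => true
  | .bw => false
  | .b  => false
/-- The invariant `#r = #b + 2·#b^ω` of the protocol reads `∑ weight = 0`. -/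
def weight : St → ℤ
  | .rw => 0
  | .bw => -2
  | .r  => 1
  | .b  => -1

theorem weight_delta (p q : St) :
    weight (delta p q).1 + weight (delta p q).2 = weight p + weight q := by
  cases p <;> cases q <;> rfl

theorem Finset.sum_update_update_of_add_eq {ι M : Type*} [Fintype ι] [DecidableEq ι]
    [AddCommMonoid M] (g : ι → M) {i j : ι} (hij : i ≠ j) {x y : M}
    (hxy : x + y = g i + g j) :
    ∑ a, Function.update (Function.update g i x) j y a = ∑ a, g a := by
  have hi : i ∈ (univ : Finset ι) \ {j} := by simp [hij]
  rw [sum_update_of_mem (mem_univ j), sum_update_of_mem hi,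
    sum_eq_add_sum_sdiff_singleton_of_mem (mem_univ j), sum_eq_add_sum_sdiff_singleton_of_mem hi,
    ← add_assoc, ← add_assoc, add_comm y, hxy, add_comm (g i)]

theorem Step.sum_weight_eq {n : ℕ} {C C' : Fin n → St} (h : Step C C') :
    ∑ a, weight (C' a) = ∑ a, weight (C a) := by
  obtain ⟨i, j, hij, rfl⟩ := h
  simp only [← Function.comp_apply (f := weight), Function.comp_update]
  exact Finset.sum_update_update_of_add_eq _ hij (weight_delta _ _)

theorem sum_weight_eq_zero_of_reachable {n : ℕ} {C : Fin n → St}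
    (h : Relation.ReflTransGen Step (fun _ => St.rw) C) :
    ∑ a, weight (C a) = 0 := by
  induction h with
  | refl => simp [weight]
  | tail _ hstep ih => rw [hstep.sum_weight_eq, ih]

theorem sum_weight_eq_cnt {n : ℕ} (C : Fin n → St) :
    ∑ a, weight (C a) = cnt C .r - cnt C .b - 2 * cnt C .bw := by
  simp only [cnt, Finset.natCast_card_filter, Finset.mul_sum, ← Finset.sum_sub_distrib]
  refine Finset.sum_congr rfl fun a _ => ?_
  cases C a <;> simp [weight]

theorem cnt_add_cnt_add_cnt_add_cnt {n : ℕ} (C : Fin n → St) :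
    cnt C .rw + cnt C .bw + cnt C .r + cnt C .b = n := by
  simp only [cnt, Finset.card_filter, ← Finset.sum_add_distrib]
  conv_rhs => rw [← Finset.card_fin n, Finset.card_eq_sum_ones]
  refine Finset.sum_congr rfl fun a _ => ?_
  cases C a <;> simp

theorem stmt3_general (n : ℕ) (C : Fin n → St)
    (hreach : Relation.ReflTransGen Step (fun _ => St.rw) C)
    (htok : tokens C = 0) :
    reds C = n / 2 ∧ blues C = n / 2 := by
  have hweight := sum_weight_eq_cnt C
  rw [sum_weight_eq_zero_of_reachable hreach] at hweight
  have htotal := cnt_add_cnt_add_cnt_add_cnt C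
  unfold tokens at htok
  unfold reds blues
  omega

theorem stmt3 (n : ℕ) (C : Fin n → St)
    (hreach : Relation.ReflTransGen Step (fun _ => St.rw) C)
    (heven : Even n) (htok : tokens C = 0) :
    reds C = n / 2 ∧ blues C = n / 2 :=
  stmt3_general n C hreach htok
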